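/- arXiv:2102.00703 — 5 statements merged into one kernel-verified Lean document; each statement's English description precedes it below -/
import Mathlib

section
/- If m : ℂ → ℂ is additive in the sense that m(c + conj(d)) = m(c) + conj(m(d)) for all c, d ∈ ℂ, multiplicative (m(cd) = m(c)m(d)), and injective with m(1) = 1, then m restricted to ℝ is a ring homomorphism ℝ → ℝ. -/
/-!
Putting `c = 0` in the functional equation shows that `m` commutes with conjugation, and then
replacing `d` by `conj d` shows that `m` is additive. So `m` is a ring endomorphism of `ℂ`
commuting with conjugation, and therefore maps the fixed field `ℝ` of conjugation into itself.
-/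

open ComplexConjugate

namespace Complex

section MapAddConj

variable {m : ℂ → ℂ} (hadd : ∀ c d : ℂ, m (c + conj d) = m c + conj (m d))
include hadd

theorem map_zero_of_map_add_conj : m 0 = 0 := by
  simpa using hadd 0 0

theorem map_conj_of_map_add_conj (d : ℂ) : m (conj d) = conj (m d) := by
  simpa [map_zero_of_map_add_conj hadd] using hadd 0 d

theorem map_add_of_map_add_conj (c d : ℂ) : m (c + d) = m c + m d := by
  simpa [map_conj_of_map_add_conj hadd] using hadd c (conj d)

def ringHomOfMapAddConj (hmul : ∀ c d : ℂ, m (c * d) = m c * m d) (hone : m 1 = 1) : ℂ →+* ℂ where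
  toFun := m
  map_one' := hone
  map_mul' := hmul
  map_zero' := map_zero_of_map_add_conj hadd
  map_add' := map_add_of_map_add_conj hadd

end MapAddConj

theorem re_map_ofReal_of_map_conj {f : ℂ →+* ℂ} (hf : ∀ z, f (conj z) = conj (f z)) (r : ℝ) :
    ((f r).re : ℂ) = f r := by
  rw [← conj_eq_iff_re, ← hf, conj_ofReal]

def restrictRealOfMapConj (f : ℂ →+* ℂ) (hf : ∀ z, f (conj z) = conj (f z)) : ℝ →+* ℝ where
  toFun r := (f r).re
  map_one' := by simp
  map_mul' x y := by
    apply ofReal_injective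
    have h := re_map_ofReal_of_map_conj hf
    rw [h, ofReal_mul, ofReal_mul, h, h, map_mul]
  map_zero' := by simp
  map_add' x y := by simp

theorem ofReal_restrictRealOfMapConj (f : ℂ →+* ℂ) (hf : ∀ z, f (conj z) = conj (f z))
    (r : ℝ) : (restrictRealOfMapConj f hf r : ℂ) = f r :=
  re_map_ofReal_of_map_conj hf r

end Complex

theorem stmt_1_general (m : ℂ → ℂ)
    (hadd : ∀ c d : ℂ, m (c + (starRingEnd ℂ) d) = m c + (starRingEnd ℂ) (m d))
    (hmul : ∀ c d : ℂ, m (c * d) = m c * m d)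
    (hone : m 1 = 1) :
    ∃ f : ℝ →+* ℝ, ∀ r : ℝ, m (r : ℂ) = (f r : ℂ) :=
  ⟨Complex.restrictRealOfMapConj (Complex.ringHomOfMapAddConj hadd hmul hone)
      (Complex.map_conj_of_map_add_conj hadd),
    fun r => (Complex.ofReal_restrictRealOfMapConj
      (Complex.ringHomOfMapAddConj hadd hmul hone) _ r).symm⟩

/-- If `m : ℂ → ℂ` satisfies `m (c + conj d) = m c + conj (m d)`, is multiplicative,
injective and `m 1 = 1`, then `m` restricted to `ℝ` is a ring homomorphism `ℝ → ℝ`. -/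
theorem stmt_1 (m : ℂ → ℂ)
    (hadd : ∀ c d : ℂ, m (c + (starRingEnd ℂ) d) = m c + (starRingEnd ℂ) (m d))
    (hmul : ∀ c d : ℂ, m (c * d) = m c * m d)
    (hinj : Function.Injective m) (hone : m 1 = 1) :
    ∃ f : ℝ →+* ℝ, ∀ r : ℝ, m (r : ℂ) = (f r : ℂ) :=
  stmt_1_general m hadd hmul hone
end

section
/- Let Φ : A → B be a multiplicative bijection between function algebras. Suppose for every u in a nonempty finite family u₀,…,u_k ∈ A with each uⱼ(x₀) ≠ 0, the pointwise product ∏ⱼ uⱼ is not identically zero. Then the family of sets K_u = K ∩ supp(Φ u), for u ∈ E = {u ∈ A : u(x₀) ≠ 0}, has the finite intersection property, where K = supp(Φ u₀) for a fixed u₀ ∈ E. -/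
/-- The family of sets `K_u = K ∩ supp (Φ u)`, for `u ∈ E = {u ∈ A | u x₀ ≠ 0}`, has the
finite intersection property, where `K = supp (Φ u₀)` for a fixed `u₀ ∈ E`. -/
theorem stmt_4 {G H : Type*} [TopologicalSpace H]
    (A : Set (G → ℂ)) (B : Set (H → ℂ)) (hBcont : ∀ f ∈ B, Continuous f)
    (hAmul : ∀ u ∈ A, ∀ v ∈ A, u * v ∈ A)
    (Φ : (G → ℂ) → (H → ℂ)) (hΦbij : Set.BijOn Φ A B)
    (hΦmul : ∀ u ∈ A, ∀ v ∈ A, Φ (u * v) = Φ u * Φ v)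
    (hΦzero : ∀ w ∈ A, Φ w = 0 → w = 0)
    (x₀ : G) (u₀ : G → ℂ) (hu₀ : u₀ ∈ A) (hu₀x : u₀ x₀ ≠ 0)
    (hE : ∀ u ∈ A, u x₀ ≠ 0 → ∀ v ∈ A, v x₀ ≠ 0 → u * v ∈ A ∧ (u * v) x₀ ≠ 0) :
    ∀ S : Finset (G → ℂ), S.Nonempty → (↑S : Set (G → ℂ)) ⊆ {u ∈ A | u x₀ ≠ 0} →
      (⋂ u ∈ S, tsupport (Φ u₀) ∩ tsupport (Φ u)).Nonempty := by
  intro S hSne hSsub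
  -- Key: for S ⊆ E nonempty, ∏_{u∈S} u ∈ A, nonzero at x₀, and Φ distributes.
  have key : ∀ S : Finset (G → ℂ), S.Nonempty → (↑S : Set (G → ℂ)) ⊆ {u ∈ A | u x₀ ≠ 0} →
      S.prod id ∈ A ∧ (S.prod id) x₀ ≠ 0 ∧ Φ (S.prod id) = S.prod (fun u => Φ u) := by
    intro S hSne
    induction hSne using Finset.Nonempty.cons_induction with
    | singleton u =>
      intro hsub
      have hu := hsub (Finset.mem_coe.mpr (Finset.mem_singleton_self u))
      simp only [Set.mem_setOf_eq] at hu
      simpa using hu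
    | cons u T hu hTne ih =>
      intro hsub
      have hsub' : (↑T : Set (G → ℂ)) ⊆ {u ∈ A | u x₀ ≠ 0} := by
        intro v hv; exact hsub (by simp [hv])
      obtain ⟨hPA, hPx, hPΦ⟩ := ih hsub'
      have huE := hsub (Finset.mem_coe.mpr (Finset.mem_cons_self u T))
      simp only [Set.mem_setOf_eq] at huE
      rw [Finset.prod_cons, Finset.prod_cons]
      obtain ⟨hmA, hmx⟩ := hE u huE.1 huE.2 (T.prod id) hPA hPx
      refine ⟨by simpa using hmA, by simpa using hmx, ?_⟩
      rw [show (id u : G → ℂ) = u from rfl, hΦmul u huE.1 (T.prod id) hPA, hPΦ]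
  obtain ⟨hPA, hPx, hPΦ⟩ := key S hSne hSsub
  set P := S.prod id with hP
  set w := u₀ * P with hw
  obtain ⟨hwA, hwx⟩ := hE u₀ hu₀ hu₀x P hPA hPx
  have hwne : Φ w ≠ 0 := by
    intro h
    have := hΦzero w hwA h
    exact hwx (by rw [show u₀ * P = w from hw.symm, this]; rfl)
  obtain ⟨y, hy⟩ : ∃ y, Φ w y ≠ 0 := by
    by_contra h
    push_neg at h
    exact hwne (funext h)
  have hsplit : Φ w = Φ u₀ * S.prod (fun u => Φ u) := by
    rw [hw, hΦmul u₀ hu₀ P hPA, hPΦ]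
  rw [hsplit] at hy
  simp only [Pi.mul_apply] at hy
  have hu₀y : Φ u₀ y ≠ 0 := fun h => hy (by simp [h])
  have hprody : S.prod (fun u => Φ u) y ≠ 0 := fun h => hy (by simp [h])
  have heach : ∀ u ∈ S, Φ u y ≠ 0 := by
    intro u huS h
    apply hprody
    rw [Finset.prod_apply]
    exact Finset.prod_eq_zero huS h
  refine ⟨y, ?_⟩
  simp only [Set.mem_iInter, Set.mem_inter_iff]
  intro u huS
  exact ⟨subset_tsupport _ hu₀y, subset_tsupport _ (heach u huS)⟩
end

section
/- Let Φ be a bijection between function spaces A on G and B on H satisfying Φ(uv) = Φ(u)Φ(v) and the zero-correspondence condition: u(x) = 0 ⟺ Φ(u)(β(x)) = 0 for a bijection β : G → H. If additionally Φ is ℂ-linear and A contains a nowhere-vanishing function, then Φ(v)(β(x)) = v(x) for all v ∈ A and x ∈ G, i.e. Φ(v) = v ∘ β⁻¹. -/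
/-- A linear multiplicative bijection with zero-correspondence along a bijection `β`
is composition with `β⁻¹`: `Φ v (β x) = v x`. -/
theorem stmt_7 {G H : Type*}
    (A : Set (G → ℂ)) (B : Set (H → ℂ))
    (hAmul : ∀ u ∈ A, ∀ v ∈ A, u * v ∈ A)
    (hAlin : ∀ u ∈ A, ∀ v ∈ A, ∀ c d : ℂ, c • u + d • v ∈ A)
    (Φ : (G → ℂ) → (H → ℂ)) (hΦbij : Set.BijOn Φ A B)
    (hΦmul : ∀ u ∈ A, ∀ v ∈ A, Φ (u * v) = Φ u * Φ v)
    (hΦlin : ∀ u ∈ A, ∀ v ∈ A, ∀ c d : ℂ, Φ (c • u + d • v) = c • Φ u + d • Φ v)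
    (β : G → H) (hβbij : Function.Bijective β)
    (hβ : ∀ x : G, ∀ u ∈ A, (u x = 0 ↔ Φ u (β x) = 0))
    (u : G → ℂ) (hu : u ∈ A) (hune : ∀ x : G, u x ≠ 0)
    (hclosed : ∀ x₀ : G, ∀ v ∈ A, (fun x => v x₀ * u x - v x * u x) ∈ A) :
    ∀ v ∈ A, ∀ x : G, Φ v (β x) = v x := by
  intro v hv x
  have hvu : v * u ∈ A := hAmul v hv u hu
  have hw : (fun y => v x * u y - v y * u y) = (v x) • u + (-1 : ℂ) • (v * u) := by
    funext y
    simp [smul_eq_mul]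
    ring
  have hwA : (fun y => v x * u y - v y * u y) ∈ A := hclosed x v hv
  have hzero : (fun y => v x * u y - v y * u y) x = 0 := by simp
  have h1 := (hβ x _ hwA).mp hzero
  rw [hw, hΦlin u hu (v * u) hvu (v x) (-1), hΦmul v hv u hu] at h1
  have hune' : Φ u (β x) ≠ 0 := fun h => hune x ((hβ x u hu).mpr h)
  simp only [Pi.add_apply, Pi.smul_apply, Pi.mul_apply, smul_eq_mul, neg_one_mul] at h1
  have : (v x - Φ v (β x)) * Φ u (β x) = 0 := by linear_combination h1
  rcases mul_eq_zero.mp this with h | h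
  · exact (sub_eq_zero.mp h).symm
  · exact absurd h hune'
end

section
/- Let Φ : A → B be a bijection between function algebras satisfying Φ(uv) = Φ(u)Φ(v). If w ∈ A is nowhere vanishing and there exists u ∈ A with Φ(u) nowhere vanishing, and c ∈ ℂ is such that c·u ∈ A for all u ∈ A, then the 'multiplier' m(c, y) := Φ(c·w)(y)/Φ(w)(y) is independent of the choice of nowhere-Φ-vanishing w: Φ(c·u)(y) = m(c, y)·Φ(u)(y) for all u ∈ A and y ∈ H. -/
/-- The multiplier `m(c, y) = Φ(c·w)(y)/Φ(w)(y)` is independent of the choice of the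
nowhere-`Φ`-vanishing function `w`: `Φ(c·u)(y) = m(c,y)·Φ(u)(y)` for all `u ∈ A`. -/
theorem stmt_13 {G H : Type*}
    (A : Set (G → ℂ)) (B : Set (H → ℂ))
    (hAmul : ∀ u ∈ A, ∀ v ∈ A, u * v ∈ A)
    (Φ : (G → ℂ) → (H → ℂ)) (hΦbij : Set.BijOn Φ A B)
    (hΦmul : ∀ u ∈ A, ∀ v ∈ A, Φ (u * v) = Φ u * Φ v)
    (w : G → ℂ) (hw : w ∈ A) (hΦw : ∀ y : H, Φ w y ≠ 0)
    (c : ℂ) (hc : ∀ u ∈ A, c • u ∈ A) :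
    ∀ u ∈ A, ∀ y : H, Φ (c • u) y = (Φ (c • w) y / Φ w y) * Φ u y := by
  intro u hu y
  have h1 := hΦmul (c • u) (hc u hu) w hw
  have h2 := hΦmul u hu (c • w) (hc w hw)
  have key : (c • u) * w = u * (c • w) := by
    rw [smul_mul_assoc, mul_smul_comm]
  rw [key, h2] at h1
  have := congrFun h1 y
  simp only [Pi.mul_apply] at this
  rw [div_mul_eq_mul_div, eq_div_iff (hΦw y)]
  linear_combination -this
end

section
/- Let G be a topological space, A a set of continuous functions G → ℂ such that for every compact K ⊆ G there is v ∈ A with v = 1 on K, and suppose every v ∈ A vanishes at infinity (v ∈ C₀(G)). Let Φ : A → B be multiplicative into continuous functions on H that also vanish at infinity, satisfying: u·v = u implies Φ(v) = 1 on supp(Φ u). Then Φ maps compactly supported elements of A to compactly supported elements of B. -/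
open Filter

/-- A multiplicative map between algebras of functions vanishing at infinity, satisfying
the `u·v = u ⟹ Φ v = 1` on `supp (Φ u)` property, maps compactly supported functions to
compactly supported functions. -/
theorem stmt_17 {G H : Type*} [TopologicalSpace G] [TopologicalSpace H]
    [LocallyCompactSpace G] [LocallyCompactSpace H] [T2Space G] [T2Space H]
    (A : Set (G → ℂ)) (B : Set (H → ℂ))
    (hAcont : ∀ u ∈ A, Continuous u)
    (hBcont : ∀ w ∈ B, Continuous w)
    (hAzero : ∀ u ∈ A, Tendsto u (cocompact G) (nhds 0))
    (hBzero : ∀ w ∈ B, Tendsto w (cocompact H) (nhds 0))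
    (hone : ∀ u ∈ A, HasCompactSupport u → ∃ v ∈ A, ∀ x ∈ tsupport u, v x = 1)
    (Φ : (G → ℂ) → (H → ℂ)) (hΦmaps : Set.MapsTo Φ A B)
    (hkey : ∀ u ∈ A, ∀ v ∈ A, u * v = u → ∀ y ∈ tsupport (Φ u), Φ v y = 1) :
    ∀ u ∈ A, HasCompactSupport u → HasCompactSupport (Φ u) := by
  intro u hu hcu
  obtain ⟨v, hv, hv1⟩ := hone u hu hcu
  have huv : u * v = u := by
    funext x
    by_cases hx : x ∈ tsupport u
    · simp [hv1 x hx]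
    · have hx0 : u x = 0 := image_eq_zero_of_notMem_tsupport hx
      simp [hx0]
  have h1 : ∀ y ∈ tsupport (Φ u), Φ v y = 1 := hkey u hu v hv huv
  have hz := hBzero (Φ v) (hΦmaps hv)
  have : ∀ᶠ y in cocompact H, Φ v y ∈ Metric.ball 0 (1/2) :=
    hz.eventually (Metric.ball_mem_nhds 0 (by norm_num))
  obtain ⟨K, hK, hKs⟩ := mem_cocompact.mp this
  refine IsCompact.of_isClosed_subset hK (isClosed_tsupport _) ?_
  intro y hy
  by_contra hyK
  have := hKs hyK
  simp only [Set.mem_setOf_eq, h1 y hy] at this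
  norm_num at this
end
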